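/- Let A ⊆ K be a ℂ-subalgebra and W ⊆ V a ℂ-subspace with a • W ⊆ W for all a ∈ A. Let f̃ : W → V and g̃ : A → K be ℂ-linear maps, and set W̄ = {(w, u) ∈ V × V : w ∈ W and u − f̃(w) ∈ W} and Ā = {(a, b) ∈ K × K : a ∈ A and b − g̃(a) ∈ A}, where V × V carries the dual-number scalar action (f₀, f₁) • (v₀, v₁) := (f₀ • v₀, f₀ • v₁ + f₁ • v₀) of K × K. Then Ā • W̄ ⊆ W̄ (i.e., (a, b) • (w, u) ∈ W̄ for all (a, b) ∈ Ā and (w, u) ∈ W̄) if and only if f̃(a • w) − a • f̃(w) − g̃(a) • w ∈ W for all a ∈ A and w ∈ W; that is, a first-order deformation of the module W over the algebra A is given exactly by a first-order scalar differential operator f : W → V/W over the derivation g : A → K/A. -/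
import Mathlib


set_option synthInstance.maxHeartbeats 400000
set_option maxHeartbeats 1000000

noncomputable section

/-- `K = ℂ((z))`, the field of formal Laurent series over `ℂ`. -/
abbrev K : Type := LaurentSeries ℂ

/-- `V = Kⁿ`. -/
abbrev V (n : ℕ) : Type := Fin n → K

/-- The dual-number scalar action of `K × K` on `V × V`:
`(f₀, f₁) • (v₀, v₁) = (f₀ • v₀, f₀ • v₁ + f₁ • v₀)`. -/
def dualAct {n : ℕ} (q : K × K) (p : V n × V n) : V n × V n :=
  (q.1 • p.1, q.1 • p.2 + q.2 • p.1)

/-- The first-order deformation `W̄ = {(w, u) : w ∈ W, u − f̃(w) ∈ W}` of `W` determined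
by a `ℂ`-linear map `f̃ : W → V`. -/
def defSubspace {n : ℕ} (W : Submodule ℂ (V n)) (ft : ↥W →ₗ[ℂ] V n) :
    Set (V n × V n) :=
  {p | ∃ hw : p.1 ∈ W, p.2 - ft ⟨p.1, hw⟩ ∈ W}

/-- The first-order deformation `Ā = {(a, b) : a ∈ A, b − g̃(a) ∈ A}` of `A` determined
by a `ℂ`-linear map `g̃ : A → K`. -/
def defSubalgebra (A : Subalgebra ℂ K) (gt : ↥A →ₗ[ℂ] K) : Set (K × K) :=
  {q | ∃ ha : q.1 ∈ A, q.2 - gt ⟨q.1, ha⟩ ∈ A}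

/-- A first-order deformation of the module `W` over the algebra `A` is given exactly by
a first-order scalar differential operator `f : W → V/W` over the derivation
`g : A → K/A`: the deformed module `W̄` is stable under the deformed algebra `Ā` (for the
dual-number action) if and only if `f̃(a • w) − a • f̃(w) − g̃(a) • w ∈ W` for all
`a ∈ A`, `w ∈ W`. -/
theorem deformation_stable_iff_firstOrderOperator (n : ℕ) (hn : 1 ≤ n)
    (A : Subalgebra ℂ K) (W : Submodule ℂ (V n))
    (hAW : ∀ a ∈ A, ∀ w ∈ W, a • w ∈ W)
    (ft : ↥W →ₗ[ℂ] V n) (gt : ↥A →ₗ[ℂ] K) :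
    (∀ q ∈ defSubalgebra A gt, ∀ p ∈ defSubspace W ft,
      dualAct q p ∈ defSubspace W ft) ↔
    (∀ (a : K) (ha : a ∈ A) (w : V n) (hw : w ∈ W),
      ft ⟨a • w, hAW a ha w hw⟩ - a • ft ⟨w, hw⟩ - gt ⟨a, ha⟩ • w ∈ W) := by
  constructor
  · intro H a ha w hw
    have hq : (a, gt ⟨a, ha⟩) ∈ defSubalgebra A gt := ⟨ha, by simpa using A.zero_mem⟩
    have hp : (w, ft ⟨w, hw⟩) ∈ defSubspace W ft := ⟨hw, by simpa using W.zero_mem⟩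
    obtain ⟨h1, h2⟩ := H _ hq _ hp
    have h1' : a • w ∈ W := h1
    have h2' : a • ft ⟨w, hw⟩ + gt ⟨a, ha⟩ • w - ft ⟨a • w, h1'⟩ ∈ W := h2
    have := W.neg_mem h2'
    have : -(a • ft ⟨w, hw⟩ + gt ⟨a, ha⟩ • w - ft ⟨a • w, hAW a ha w hw⟩) ∈ W := this
    convert this using 1
    abel
  · rintro H q ⟨ha, hb⟩ p ⟨hw, hu⟩
    refine ⟨hAW _ ha _ hw, ?_⟩
    have key := H q.1 ha p.1 hw
    have t1 : q.1 • (p.2 - ft ⟨p.1, hw⟩) ∈ W := hAW _ ha _ hu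
    have t2 : (q.2 - gt ⟨q.1, ha⟩) • p.1 ∈ W := hAW _ hb _ hw
    have := W.add_mem (W.add_mem t1 t2) (W.neg_mem key)
    convert this using 1
    show q.1 • p.2 + q.2 • p.1 - ft ⟨q.1 • p.1, _⟩ = _
    funext i
    simp only [Pi.add_apply, Pi.sub_apply, Pi.smul_apply, Pi.neg_apply, smul_eq_mul]
    ring


end
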